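/- arXiv:1211.3919 — 4 statements merged into one kernel-verified Lean document; each statement's English description precedes it below -/
import Mathlib

section
/- Let f_1,...,f_n ∈ ℤ[x_1,...,x_N] with n ≤ N, and suppose a ∈ ℤ^N satisfies f_i(a) ≡ 0 (mod p^{2σ-1+ν}) for all i, and the Jacobian of f at a has an n×n minor with determinant of p-adic absolute value p^{1-σ}. Then the number M(σ,ν) of solutions modulo p^{2σ-1+ν} to this system (counted with the distinctness convention of the paper) satisfies M(σ, ν+1) ≥ p^{N-n} M(σ, ν). -/
/-!
Hensel's lemma with a singular Jacobian minor. Let `x` solve the system modulo `p^(2σ-1+ν)`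
with `det L₀(x) = p^(σ-1) u`, `p ∤ u`. By Taylor's formula,
`f(x + p^(σ+ν) t) ≡ f(x) + p^(σ+ν) J(x) t` modulo `p^(2σ+2ν)`, hence modulo `p^(2σ+ν)`.
Prescribe the last `N - n` coordinates of `t` as `p^(σ-1) e` with `e` arbitrary; since
`L₀ · adj L₀ = p^(σ-1) u`, the first `n` coordinates can then be solved for with the adjugate.
The `p^(N-n)` lifts obtained this way agree with `x` modulo `p^(2σ-1+ν)` after rescaling the
first `n` coordinates by `p^(σ-1)` (which turns `p^(σ+ν)` into `p^(2σ-1+ν)`), and their last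
coordinates differ by `p^(2σ-1+ν) e`, so they are distinct modulo `p^(2σ+ν)`.
-/

open MvPolynomial Matrix Function

/-- `Mcount p n N σ ν hnN f` is the paper's `M(σ,ν)`: the number of residue classes
`ā` modulo `p^(2σ-1+ν)` with `fᵢ(ā) ≡ 0 (mod p^(2σ-1+ν))` for all `i` and such that
the fixed `n×n` minor `L₀` (the first `n` columns) of the Jacobian has determinant
of `p`-adic absolute value `p^(1-σ)`, where solutions are distinguished via the
vectors `(p^(σ-1)ā₁, ā₂)` with `ā₁` the first `n` coordinates. -/
noncomputable def Mcount (p n N σ ν : ℕ) (hnN : n ≤ N)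
    (f : Fin n → MvPolynomial (Fin N) ℤ) : ℕ :=
  Nat.card ((fun (a : Fin N → ZMod (p ^ (2 * σ - 1 + ν))) (j : Fin N) =>
      if (j : ℕ) < n then (p : ZMod (p ^ (2 * σ - 1 + ν))) ^ (σ - 1) * a j else a j) ''
    {a : Fin N → ZMod (p ^ (2 * σ - 1 + ν)) |
      (∀ i, ((p : ℤ) ^ (2 * σ - 1 + ν)) ∣
          MvPolynomial.eval (fun j => ((a j).val : ℤ)) (f i)) ∧
      ((p : ℤ) ^ (σ - 1) ∣ Matrix.det (Matrix.of fun i k : Fin n =>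
          MvPolynomial.eval (fun j => ((a j).val : ℤ))
            (MvPolynomial.pderiv (Fin.castLE hnN k) (f i)))) ∧
      ¬ ((p : ℤ) ^ σ ∣ Matrix.det (Matrix.of fun i k : Fin n =>
          MvPolynomial.eval (fun j => ((a j).val : ℤ))
            (MvPolynomial.pderiv (Fin.castLE hnN k) (f i))))})

section Congruences

variable {ι : Type*} {M : ℤ}

theorem MvPolynomial.eval_modEq {x y : ι → ℤ} (h : ∀ j, x j ≡ y j [ZMOD M])
    (g : MvPolynomial ι ℤ) : eval x g ≡ eval y g [ZMOD M] := by
  induction g using MvPolynomial.induction_on with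
  | C a => simp [Int.ModEq.refl]
  | add g₁ g₂ h₁ h₂ => simpa using h₁.add h₂
  | mul_X g j hg => simpa using hg.mul (h j)

theorem MvPolynomial.eval_add_smul_modEq [Fintype ι] [DecidableEq ι] (x t : ι → ℤ)
    (g : MvPolynomial ι ℤ) :
    eval (x + M • t) g ≡ eval x g + M * ∑ j, t j * eval x (pderiv j g) [ZMOD M ^ 2] := by
  induction g using MvPolynomial.induction_on with
  | C a => simp [Int.ModEq.refl]
  | add g₁ g₂ h₁ h₂ =>
    convert h₁.add h₂ using 1
    · simp only [map_add]
    · simp only [map_add, mul_add, Finset.sum_add_distrib]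
      ring
  | mul_X g k hg =>
    have hM : eval (x + M • t) g ≡ eval x g [ZMOD M] :=
      eval_modEq (fun j => by simp [Int.modEq_iff_dvd]) g
    have hsum : ∑ j, t j * eval x (pderiv j (g * X k))
        = (∑ j, t j * eval x (pderiv j g)) * x k + t k * eval x g := by
      simp only [Derivation.leibniz, pderiv_X, Pi.single_apply, apply_ite, smul_eq_mul, mul_one,
        mul_zero, map_add, map_zero, map_mul, eval_X, mul_add, Finset.sum_add_distrib,
        Finset.sum_ite_eq, Finset.mem_univ, if_true, Finset.sum_mul]
      rw [add_comm]
      exact congrArg (· + _) (Finset.sum_congr rfl fun _ _ => by ring)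
    rw [sq] at hg ⊢
    convert (hg.mul_right (x k)).add ((hM.mul_left' (c := M)).mul_right (t k)) using 1
    · simp only [map_mul, eval_X, Pi.add_apply, Pi.smul_apply, smul_eq_mul]
      ring
    · rw [hsum]
      simp only [map_mul, eval_X]
      ring

theorem Matrix.det_modEq [Fintype ι] [DecidableEq ι] {A B : Matrix ι ι ℤ}
    (h : ∀ i k, A i k ≡ B i k [ZMOD M]) : A.det ≡ B.det [ZMOD M] := by
  simp only [det_apply, Units.smul_def]
  exact Int.ModEq.sum fun _ _ => (Int.ModEq.prod fun _ _ => h _ _).mul_left _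

theorem ZMod.eq_of_intCast_add_pow_mul_val_eq {p : ℕ} [NeZero p] {m : ℕ} {z : ℤ}
    {a b : ZMod p}
    (h : ((z + (p : ℤ) ^ m * a.val : ℤ) : ZMod (p ^ (m + 1)))
      = ((z + (p : ℤ) ^ m * b.val : ℤ) : ZMod (p ^ (m + 1)))) : a = b := by
  rw [ZMod.intCast_eq_intCast_iff_dvd_sub] at h
  have hdvd : (p : ℤ) ^ m * p ∣ (p : ℤ) ^ m * ((b.val : ℤ) - a.val) := by
    rw [← pow_succ]
    convert h using 1 <;> push_cast <;> ring
  rw [mul_dvd_mul_iff_left (pow_ne_zero _ (by exact_mod_cast NeZero.ne p)),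
    ← ZMod.intCast_eq_intCast_iff_dvd_sub] at hdvd
  simpa using hdvd

end Congruences

theorem Nat.card_mul_card_le_of_exists_injective {α β T : Type*} (ρ : β → α) {s : Set α}
    {t : Set β} [Finite t]
    (h : ∀ b ∈ s, ∃ g : T → t, Injective g ∧ ∀ e, ρ (g e) = b) :
    Nat.card T * Nat.card s ≤ Nat.card t := by
  choose g hg hρ using fun b : s => h b b.2
  rw [← Nat.card_prod]
  refine Nat.card_le_card_of_injective (fun eb => g eb.2 eb.1) fun ⟨e, b⟩ ⟨e', b'⟩ hgg => ?_
  dsimp only at hgg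
  obtain rfl : b = b' := Subtype.ext (by rw [← hρ b e, ← hρ b' e', hgg])
  rw [(hg b).eq_iff.1 hgg]

namespace Mcount

section Lifting

variable {n N : ℕ} (hnN : n ≤ N) (f : Fin n → MvPolynomial (Fin N) ℤ)

noncomputable def jacobianMinor (x : Fin N → ℤ) : Matrix (Fin n) (Fin n) ℤ :=
  of fun i k => eval x (pderiv (Fin.castLE hnN k) (f i))

theorem sum_extend_mul_eval_pderiv (x : Fin N → ℤ) (w : Fin n → ℤ) (i : Fin n) :
    ∑ j, extend (Fin.castLE hnN) w 0 j * eval x (pderiv j (f i))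
      = (jacobianMinor hnN f x *ᵥ w) i := by
  refine (Fintype.sum_of_injective _ (Fin.castLE_injective hnN) _ _ (fun j hj => ?_)
    fun k => ?_).symm
  · rw [extend_apply' _ _ _ hj, Pi.zero_apply, zero_mul]
  · simp [jacobianMinor, (Fin.castLE_injective hnN).extend_apply, mul_comm]

theorem exists_lift_of_det_eq {q : ℤ} {s K : ℕ} (hsK : s < K) {x : Fin N → ℤ} {u : ℤ}
    (hdet : (jacobianMinor hnN f x).det = q ^ s * u) (hu : IsCoprime q u)
    (hx : ∀ i, q ^ (s + K) ∣ eval x (f i)) (τ : Fin N → ℤ) :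
    ∃ w : Fin n → ℤ, ∀ i,
      q ^ (s + K + 1) ∣
        eval (x + q ^ K • (extend (Fin.castLE hnN) w 0 + q ^ s • τ)) (f i) := by
  obtain ⟨a, v, hav⟩ := hu
  choose c hc using hx
  set r : Fin n → ℤ := fun i => c i + ∑ j, τ j * eval x (pderiv j (f i))
  refine ⟨-v • ((jacobianMinor hnN f x).adjugate *ᵥ r), fun i => ?_⟩
  set t :=
    extend (Fin.castLE hnN) (-v • ((jacobianMinor hnN f x).adjugate *ᵥ r)) 0 + q ^ s • τ
  have hJ : jacobianMinor hnN f x *ᵥ (-v • ((jacobianMinor hnN f x).adjugate *ᵥ r))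
      = (-v * q ^ s * u) • r := by
    rw [mulVec_smul, mulVec_mulVec, mul_adjugate, hdet, smul_mulVec, one_mulVec, smul_smul]
    ring_nf
  have hlin : ∑ j, t j * eval x (pderiv j (f i)) = q ^ s * (r i - c i) - v * q ^ s * u * r i := by
    simp only [t, Pi.add_apply, add_mul, Finset.sum_add_distrib, sum_extend_mul_eval_pderiv, hJ]
    simp only [neg_mul, mul_assoc, Pi.smul_apply, Int.zsmul_eq_mul, add_sub_cancel_left,
      Finset.mul_sum, r]
    ring
  have htaylor := (eval_add_smul_modEq x t (f i)).of_dvd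
    (by rw [← pow_mul]; exact pow_dvd_pow q (by omega) : q ^ (s + K + 1) ∣ (q ^ K) ^ 2)
  rw [hlin, hc] at htaylor
  refine Int.modEq_zero_iff_dvd.1 (htaylor.trans (Int.modEq_zero_iff_dvd.2 ⟨a * r i, ?_⟩))
  linear_combination -(q ^ (s + K) * r i) * hav

end Lifting

section Counting

variable {n N : ℕ}

def rescale {R : Type*} [Mul R] (n : ℕ) (c : R) (a : Fin N → R) : Fin N → R :=
  fun j => if (j : ℕ) < n then c * a j else a j

theorem comp_rescale {R S : Type*} [NonAssocSemiring R] [NonAssocSemiring S] (φ : R →+* S)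
    (c : R) (a : Fin N → R) : φ ∘ rescale n c a = rescale n (φ c) (φ ∘ a) := by
  funext j
  by_cases h : (j : ℕ) < n <;> simp [rescale, h]

variable (p σ : ℕ) (hnN : n ≤ N) (f : Fin n → MvPolynomial (Fin N) ℤ)

def IsSolution (μ : ℕ) (x : Fin N → ℤ) : Prop :=
  (∀ i, (p : ℤ) ^ μ ∣ eval x (f i)) ∧
    (p : ℤ) ^ (σ - 1) ∣ (jacobianMinor hnN f x).det ∧
      ¬ (p : ℤ) ^ σ ∣ (jacobianMinor hnN f x).det

def solutionSet (μ : ℕ) : Set (Fin N → ZMod (p ^ μ)) :=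
  {a | IsSolution p σ hnN f μ fun j => ((a j).val : ℤ)}

def rescaledSolutions (μ : ℕ) : Set (Fin N → ZMod (p ^ μ)) :=
  rescale n ((p : ZMod (p ^ μ)) ^ (σ - 1)) '' solutionSet p σ hnN f μ

theorem eq_card_rescaledSolutions (ν : ℕ) :
    Mcount p n N σ ν hnN f = Nat.card (rescaledSolutions p σ hnN f (2 * σ - 1 + ν)) :=
  rfl

variable {p σ hnN f}

theorem IsSolution.of_modEq {μ μ' : ℕ} {x y : Fin N → ℤ} (hx : IsSolution p σ hnN f μ x)
    (hxy : ∀ j, x j ≡ y j [ZMOD p ^ σ]) (hy : ∀ i, (p : ℤ) ^ μ' ∣ eval y (f i)) :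
    IsSolution p σ hnN f μ' y := by
  have hdet : (jacobianMinor hnN f x).det ≡ (jacobianMinor hnN f y).det [ZMOD p ^ σ] :=
    det_modEq fun i k => eval_modEq hxy _
  exact ⟨hy, (hdet.of_dvd (pow_dvd_pow _ (Nat.sub_le σ 1))).dvd_iff.1 hx.2.1,
    hdet.dvd_iff.not.1 hx.2.2⟩

theorem intCast_mem_solutionSet [NeZero p] {μ : ℕ} (hσμ : σ ≤ μ) {y : Fin N → ℤ}
    (hy : IsSolution p σ hnN f μ y) :
    (fun j => (y j : ZMod (p ^ μ))) ∈ solutionSet p σ hnN f μ := by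
  have hval : ∀ j, y j ≡ ((y j : ZMod (p ^ μ)).val : ℤ) [ZMOD p ^ μ] := fun j => by
    rw [ZMod.val_intCast]
    exact_mod_cast (Int.mod_modEq _ _).symm
  exact hy.of_modEq (fun j => (hval j).of_dvd (pow_dvd_pow _ hσμ))
    fun i => (eval_modEq hval (f i)).dvd_iff.1 (hy.1 i)

theorem IsSolution.exists_lift (hp : p.Prime) (hσ : 1 ≤ σ) {ν : ℕ} {x : Fin N → ℤ}
    (hx : IsSolution p σ hnN f (2 * σ - 1 + ν) x) (τ : Fin N → ℤ) :
    ∃ y, IsSolution p σ hnN f (2 * σ - 1 + ν + 1) y ∧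
      (∀ j, rescale n ((p : ℤ) ^ (σ - 1)) y j
        ≡ rescale n ((p : ℤ) ^ (σ - 1)) x j [ZMOD p ^ (2 * σ - 1 + ν)]) ∧
      ∀ j : Fin N, n ≤ (j : ℕ) → y j = x j + p ^ (2 * σ - 1 + ν) * τ j := by
  have hmK : σ - 1 + (σ + ν) = 2 * σ - 1 + ν := by omega
  obtain ⟨u, hu⟩ := hx.2.1
  have hpu : IsCoprime (p : ℤ) u := by
    refine (Nat.prime_iff_prime_int.mp hp).coprime_iff_not_dvd.2 fun hdvd => hx.2.2 ?_
    rw [hu, ← Nat.sub_add_cancel hσ, pow_succ, Nat.add_sub_cancel]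
    exact mul_dvd_mul_left _ hdvd
  obtain ⟨w, hw⟩ := exists_lift_of_det_eq hnN f (s := σ - 1) (K := σ + ν) (by omega) hu hpu
    (by rw [hmK]; exact hx.1) τ
  set y := x + (p : ℤ) ^ (σ + ν) • (extend (Fin.castLE hnN) w 0 + (p : ℤ) ^ (σ - 1) • τ)
  have hxy : ∀ j, x j ≡ y j [ZMOD p ^ (σ + ν)] := fun j => Int.modEq_iff_dvd.2 (by simp [y])
  have htail : ∀ j : Fin N, n ≤ (j : ℕ) → y j = x j + p ^ (2 * σ - 1 + ν) * τ j := by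
    intro j hj
    have : extend (Fin.castLE hnN) w 0 j = 0 :=
      extend_apply' _ _ _ (by rintro ⟨k, rfl⟩; exact hj.not_gt k.isLt)
    simp only [y, this, Pi.add_apply, Pi.smul_apply, smul_eq_mul, zero_add, ← hmK, pow_add]
    ring
  refine ⟨y, hx.of_modEq (fun j => (hxy j).of_dvd (pow_dvd_pow _ (by omega)))
    (by rw [← hmK]; exact hw), fun j => ?_, htail⟩
  by_cases hj : (j : ℕ) < n
  · simp only [rescale, if_pos hj]
    rw [← hmK, pow_add]
    exact ((hxy j).mul_left' (c := (p : ℤ) ^ (σ - 1))).symm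
  · simp only [rescale, if_neg hj]
    rw [htail j (not_lt.1 hj)]
    exact Int.modEq_iff_dvd.2 (by simp)

theorem exists_injective_lift (hp : p.Prime) (hσ : 1 ≤ σ) {ν : ℕ}
    {a : Fin N → ZMod (p ^ (2 * σ - 1 + ν))}
    (ha : a ∈ solutionSet p σ hnN f (2 * σ - 1 + ν)) :
    ∃ g : (Fin (N - n) → ZMod p) → rescaledSolutions p σ hnN f (2 * σ - 1 + ν + 1),
      Injective g ∧ ∀ e, ZMod.castHom (pow_dvd_pow p (Nat.le_succ _)) _ ∘ (g e : Fin N → _)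
        = rescale n ((p : ZMod (p ^ (2 * σ - 1 + ν))) ^ (σ - 1)) a := by
  have : NeZero p := ⟨hp.ne_zero⟩
  let tail : Fin (N - n) ↪ Fin N := (Fin.natAddEmb n).trans (Fin.castLEEmb (by omega))
  choose y hy hres htail using fun e : Fin (N - n) → ZMod p =>
    IsSolution.exists_lift hp hσ ha (extend tail (fun k => ((e k).val : ℤ)) 0)
  refine ⟨fun e => ⟨_, _, intCast_mem_solutionSet (by omega) (hy e), rfl⟩, fun e e' hee => ?_,
    fun e => ?_⟩
  · funext k
    have hk : n ≤ (tail k : ℕ) := by simp [tail]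
    have := congrFun (congrArg Subtype.val hee) (tail k)
    simp only [rescale, if_neg hk.not_gt, htail _ _ hk, tail.injective.extend_apply] at this
    exact ZMod.eq_of_intCast_add_pow_mul_val_eq this
  · have ha' : a = fun j => (((a j).val : ℤ) : ZMod (p ^ (2 * σ - 1 + ν))) :=
      funext fun j => by simp
    rw [comp_rescale, map_pow, map_natCast, ha']
    funext j
    have := (ZMod.intCast_eq_intCast_iff _ _ _).2 (by exact_mod_cast hres e j)
    simpa [rescale] using this

end Counting

end Mcount

theorem stmt_5_general (p : ℕ) (hp : p.Prime) (σ ν n N : ℕ) (hσ : 1 ≤ σ) (hnN : n ≤ N)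
    (f : Fin n → MvPolynomial (Fin N) ℤ) :
    p ^ (N - n) * Mcount p n N σ ν hnN f ≤ Mcount p n N σ (ν + 1) hnN f := by
  have : NeZero p := ⟨hp.ne_zero⟩
  have hcard : Nat.card (Fin (N - n) → ZMod p) = p ^ (N - n) := by simp
  rw [Mcount.eq_card_rescaledSolutions, Mcount.eq_card_rescaledSolutions, ← hcard]
  refine Nat.card_mul_card_le_of_exists_injective
    (ZMod.castHom (pow_dvd_pow p (Nat.le_succ _)) _ ∘ ·) ?_
  rintro _ ⟨a, ha, rfl⟩
  exact Mcount.exists_injective_lift hp hσ ha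

/-- Lifting step: if the system has an approximate solution `a` modulo
`p^(2σ-1+ν)` whose Jacobian has an `n×n` minor of determinant with `p`-adic
absolute value `p^(1-σ)`, then `M(σ, ν+1) ≥ p^(N-n) · M(σ, ν)`. -/
theorem stmt_5 (p : ℕ) (hp : p.Prime) (σ ν n N : ℕ) (hσ : 1 ≤ σ) (hnN : n ≤ N)
    (f : Fin n → MvPolynomial (Fin N) ℤ) (a : Fin N → ℤ)
    (ha : ∀ i, ((p : ℤ) ^ (2 * σ - 1 + ν)) ∣ MvPolynomial.eval a (f i))
    (hdet :
      ((p : ℤ) ^ (σ - 1) ∣ Matrix.det (Matrix.of fun i k : Fin n =>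
          MvPolynomial.eval a (MvPolynomial.pderiv (Fin.castLE hnN k) (f i)))) ∧
      ¬ ((p : ℤ) ^ σ ∣ Matrix.det (Matrix.of fun i k : Fin n =>
          MvPolynomial.eval a (MvPolynomial.pderiv (Fin.castLE hnN k) (f i))))) :
    p ^ (N - n) * Mcount p n N σ ν hnN f ≤ Mcount p n N σ (ν + 1) hnN f :=
  stmt_5_general p hp σ ν n N hσ hnN f
end

section
/- If M(σ, 0) > 0 and N ≥ n, then for every integer ν ≥ 0 one has M(σ, ν) ≥ p^{(N-n)ν} M(σ, 0). -/
open MvPolynomial Matrix Function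

namespace MvPolynomial

variable {R ι : Type*} [CommRing R]

theorem dvd_eval_sub_eval {a b : ι → R} {d : R} (h : ∀ j, d ∣ a j - b j)
    (g : MvPolynomial ι R) : d ∣ eval a g - eval b g := by
  induction g using MvPolynomial.induction_on with
  | C r => simp
  | add g g' hg hg' => simpa [add_sub_add_comm] using dvd_add hg hg'
  | mul_X g j hg =>
    have : eval a (g * X j) - eval b (g * X j) =
        (eval a g - eval b g) * a j + eval b g * (a j - b j) := by
      simp only [eval_mul, eval_X]
      ring
    rw [this]
    exact dvd_add (dvd_mul_of_dvd_left hg _) (dvd_mul_of_dvd_right (h j) _)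

theorem exists_eval_add_smul_eq [Fintype ι] (a u : ι → R) (q : R)
    (g : MvPolynomial ι R) :
    ∃ k, eval (a + q • u) g = eval a g + q * ∑ j, u j * eval a (pderiv j g) + q ^ 2 * k := by
  induction g using MvPolynomial.induction_on with
  | C r => exact ⟨0, by simp⟩
  | add g g' hg hg' =>
    obtain ⟨k, hk⟩ := hg
    obtain ⟨k', hk'⟩ := hg'
    exact ⟨k + k', by simp only [map_add, hk, hk', Finset.sum_add_distrib, mul_add]; ring⟩
  | mul_X g j hg =>
    obtain ⟨k, hk⟩ := hg
    refine ⟨k * a j + u j * ∑ i, u i * eval a (pderiv i g) + q * u j * k, ?_⟩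
    have hsum : ∑ i, u i * eval a (pderiv i (g * X j)) =
        (∑ i, u i * eval a (pderiv i g)) * a j + u j * eval a g := by
      classical
      simp [pderiv_X, Pi.single_apply, mul_add, Finset.sum_add_distrib, Finset.sum_mul,
        apply_ite, mul_comm (a j), mul_assoc, add_comm]
    rw [hsum, eval_mul, hk]
    simp only [eval_mul, eval_X, Pi.add_apply, Pi.smul_apply, smul_eq_mul]
    ring

end MvPolynomial

namespace Matrix

variable {n R : Type*} [Fintype n] [DecidableEq n] [CommRing R]

theorem dvd_det_sub_det {M M' : Matrix n n R} {d : R} (h : ∀ i j, d ∣ M i j - M' i j) :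
    d ∣ M.det - M'.det := by
  have hmap : (Ideal.Quotient.mk (Ideal.span {d})).mapMatrix M =
      (Ideal.Quotient.mk (Ideal.span {d})).mapMatrix M' := by
    ext i j
    exact Ideal.Quotient.eq.2 (Ideal.mem_span_singleton.2 (h i j))
  rw [← Ideal.mem_span_singleton, ← Ideal.Quotient.eq, RingHom.map_det, RingHom.map_det, hmap]

theorem exists_mulVec_add_dvd (J : Matrix n n R) {x e d : R} (hdet : J.det = x * e)
    (he : IsCoprime e d) (w : n → R) : ∃ U, ∀ i, x * d ∣ (J *ᵥ U) i + x * w i := by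
  obtain ⟨e', v, hev⟩ := he
  refine ⟨-e' • J.adjugate *ᵥ w, fun i => ⟨v * w i, ?_⟩⟩
  rw [mulVec_smul, mulVec_mulVec, mul_adjugate, hdet]
  simp only [Pi.smul_apply, smul_mulVec, one_mulVec, smul_eq_mul]
  linear_combination (-x * w i) * hev

end Matrix

section Lifting

variable {κ ι : Type*} [Fintype κ]

noncomputable def jacobianMinor (e : κ → ι) (f : κ → MvPolynomial ι ℤ) (A : ι → ℤ) : Matrix κ κ ℤ :=
  of fun i k => eval A (pderiv (e k) (f i))

variable {p σ m : ℕ} {e : κ → ι} {f : κ → MvPolynomial ι ℤ} {A B : ι → ℤ}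

theorem sum_extend_mul_eval_pderiv [Fintype ι] (he : Injective e) (U : κ → ℤ) (i : κ) :
    ∑ j, extend e U 0 j * eval A (pderiv j (f i)) = (jacobianMinor e f A *ᵥ U) i := by
  refine (Fintype.sum_of_injective e he _ _ (fun j hj => ?_) fun k => ?_).symm
  · rw [extend_apply' _ _ _ fun ⟨k, hk⟩ => hj ⟨k, hk⟩, Pi.zero_apply, zero_mul]
  · rw [he.extend_apply]
    exact mul_comm _ _

variable [DecidableEq κ]

def HasMinorValuation (p σ : ℕ) (e : κ → ι) (f : κ → MvPolynomial ι ℤ) (A : ι → ℤ) : Prop :=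
  (p : ℤ) ^ (σ - 1) ∣ (jacobianMinor e f A).det ∧ ¬ (p : ℤ) ^ σ ∣ (jacobianMinor e f A).det

def IsMinorSolution (p σ m : ℕ) (e : κ → ι) (f : κ → MvPolynomial ι ℤ) (A : ι → ℤ) : Prop :=
  (∀ i, (p : ℤ) ^ m ∣ eval A (f i)) ∧ HasMinorValuation p σ e f A

theorem HasMinorValuation.one_le (hA : HasMinorValuation p σ e f A) : 1 ≤ σ :=
  Nat.one_le_iff_ne_zero.2 fun hσ => hA.2 (by simp [hσ])

theorem HasMinorValuation.exists_det_eq_mul (hp : p.Prime) (hA : HasMinorValuation p σ e f A) :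
    ∃ u, (jacobianMinor e f A).det = (p : ℤ) ^ (σ - 1) * u ∧ IsCoprime u p := by
  obtain ⟨u, hu⟩ := hA.1
  have hpow : (p : ℤ) ^ σ = p ^ (σ - 1) * p := by rw [← pow_succ, Nat.sub_add_cancel hA.one_le]
  refine ⟨u, hu, ((Nat.prime_iff_prime_int.1 hp).coprime_iff_not_dvd.2 fun hpu => hA.2 ?_).symm⟩
  rw [hu, hpow]
  exact mul_dvd_mul_left _ hpu

theorem HasMinorValuation.of_dvd_sub (hA : HasMinorValuation p σ e f A)
    (hAB : ∀ j, (p : ℤ) ^ σ ∣ B j - A j) : HasMinorValuation p σ e f B := by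
  have hdet : (p : ℤ) ^ σ ∣ (jacobianMinor e f B).det - (jacobianMinor e f A).det :=
    dvd_det_sub_det fun i k => dvd_eval_sub_eval hAB _
  refine ⟨(dvd_iff_dvd_of_dvd_sub ((pow_dvd_pow _ (Nat.sub_le σ 1)).trans hdet)).2 hA.1,
    fun h => hA.2 ((dvd_iff_dvd_of_dvd_sub hdet).1 h)⟩

theorem IsMinorSolution.of_dvd_sub (hA : IsMinorSolution p σ m e f A) (hσm : σ ≤ m)
    (hAB : ∀ j, (p : ℤ) ^ m ∣ B j - A j) : IsMinorSolution p σ m e f B :=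
  ⟨fun i => (dvd_iff_dvd_of_dvd_sub (dvd_eval_sub_eval hAB (f i))).2 (hA.1 i),
    hA.2.of_dvd_sub fun j => (pow_dvd_pow _ hσm).trans (hAB j)⟩

theorem IsMinorSolution.exists_lift [Fintype ι] (hp : p.Prime) {ν : ℕ} (he : Injective e)
    (hA : IsMinorSolution p σ (2 * σ - 1 + ν) e f A) (t : ι → ℤ) :
    ∃ B : ι → ℤ, (∀ k, (p : ℤ) ^ (σ + ν) ∣ B (e k) - A (e k)) ∧
      (∀ j ∉ Set.range e, B j = A j + (p : ℤ) ^ (2 * σ - 1 + ν) * t j) ∧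
      IsMinorSolution p σ (2 * σ - 1 + ν + 1) e f B := by
  obtain ⟨hsol, hval⟩ := hA
  obtain ⟨r, rfl⟩ : ∃ r, σ = r + 1 := Nat.exists_eq_add_of_le' hval.one_le
  obtain ⟨u, hdet, hcop⟩ := hval.exists_det_eq_mul hp
  rw [Nat.add_sub_cancel] at hdet
  have hm : 2 * (r + 1) - 1 + ν = r + (r + 1 + ν) := by omega
  rw [hm] at hsol ⊢
  choose c hc using hsol
  obtain ⟨U₁, hU₁⟩ := (jacobianMinor e f A).exists_mulVec_add_dvd hdet hcop
    fun i => c i + ∑ j, t j * eval A (pderiv j (f i))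
  set U : ι → ℤ := extend e U₁ 0 + (p : ℤ) ^ r • t
  refine ⟨A + (p : ℤ) ^ (r + 1 + ν) • U, fun k => ?_, fun j hj => ?_, ⟨fun i => ?_, ?_⟩⟩
  · simp
  · simp only [Pi.add_apply, Pi.smul_apply, smul_eq_mul, U, Pi.zero_apply,
      extend_apply' _ _ _ fun ⟨k, hk⟩ => hj ⟨k, hk⟩]
    ring
  · obtain ⟨k, hk⟩ := exists_eval_add_smul_eq A U ((p : ℤ) ^ (r + 1 + ν)) (f i)
    have hgrad : ∑ j, U j * eval A (pderiv j (f i)) =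
        (jacobianMinor e f A *ᵥ U₁) i + (p : ℤ) ^ r * ∑ j, t j * eval A (pderiv j (f i)) := by
      simp only [U, Pi.add_apply, Pi.smul_apply, smul_eq_mul, add_mul, Finset.sum_add_distrib,
        sum_extend_mul_eval_pderiv he, Finset.mul_sum, mul_assoc]
    have hexp : eval (A + (p : ℤ) ^ (r + 1 + ν) • U) (f i) = (p : ℤ) ^ (r + 1 + ν) *
        ((jacobianMinor e f A *ᵥ U₁) i + (p : ℤ) ^ r * (c i + ∑ j, t j * eval A (pderiv j (f i))) +
          (p : ℤ) ^ (r + 1 + ν) * k) := by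
      rw [hk, hgrad, hc]
      ring
    have hpow : (p : ℤ) ^ (r + (r + 1 + ν) + 1) = (p : ℤ) ^ (r + 1 + ν) * ((p : ℤ) ^ r * p) := by
      ring
    rw [hexp, hpow]
    refine mul_dvd_mul_left _ (dvd_add (hU₁ i) (dvd_mul_of_dvd_left ?_ _))
    rw [← pow_succ]
    exact pow_dvd_pow _ (by omega)
  · refine hval.of_dvd_sub fun j => ?_
    simp only [Pi.add_apply, Pi.smul_apply, smul_eq_mul, add_sub_cancel_left]
    exact dvd_mul_of_dvd_left (pow_dvd_pow _ (by omega)) _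

end Lifting

section Counting

variable {p n N σ : ℕ}

def weightedClass (p n σ m : ℕ) (a : Fin N → ZMod (p ^ m)) : Fin N → ZMod (p ^ m) :=
  fun j => if (j : ℕ) < n then (p : ZMod (p ^ m)) ^ (σ - 1) * a j else a j

def minorSolutions (p σ m : ℕ) (hnN : n ≤ N) (f : Fin n → MvPolynomial (Fin N) ℤ) :
    Set (Fin N → ZMod (p ^ m)) :=
  {a | IsMinorSolution p σ m (Fin.castLE hnN) f fun j => (a j).val}

theorem Mcount_eq_card_image (hnN : n ≤ N) (f : Fin n → MvPolynomial (Fin N) ℤ) (ν : ℕ) :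
    Mcount p n N σ ν hnN f = Nat.card (weightedClass p n σ (2 * σ - 1 + ν) ''
      minorSolutions p σ (2 * σ - 1 + ν) hnN f) :=
  rfl

theorem weightedClass_intCast_eq_iff {m : ℕ} {A B : Fin N → ℤ} :
    weightedClass p n σ m (fun j => (A j : ZMod (p ^ m))) =
        weightedClass p n σ m (fun j => (B j : ZMod (p ^ m))) ↔
      ∀ j : Fin N, (p : ℤ) ^ m ∣ (if (j : ℕ) < n then (p : ℤ) ^ (σ - 1) else 1) * (B j - A j) := by
  simp only [funext_iff, weightedClass]
  refine forall_congr' fun j => ?_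
  split_ifs
  · rw [mul_sub, ← Nat.cast_pow p m, ← ZMod.intCast_eq_intCast_iff_dvd_sub]
    push_cast
    rfl
  · rw [one_mul, ← Nat.cast_pow p m, ← ZMod.intCast_eq_intCast_iff_dvd_sub]

theorem exists_lift_of_mem_minorSolutions (hp : p.Prime) {hnN : n ≤ N}
    {f : Fin n → MvPolynomial (Fin N) ℤ} {ν : ℕ} {a : Fin N → ZMod (p ^ (2 * σ - 1 + ν))}
    (ha : a ∈ minorSolutions p σ (2 * σ - 1 + ν) hnN f)
    (τ : {j // j ∉ Set.range (Fin.castLE hnN)} → ZMod p) :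
    ∃ B : Fin N → ℤ,
      (fun j => (B j : ZMod (p ^ (2 * σ - 1 + (ν + 1))))) ∈
        minorSolutions p σ (2 * σ - 1 + (ν + 1)) hnN f ∧
      weightedClass p n σ (2 * σ - 1 + ν) (fun j => (B j : ZMod (p ^ (2 * σ - 1 + ν)))) =
        weightedClass p n σ (2 * σ - 1 + ν) a ∧
      ∀ j : {j // j ∉ Set.range (Fin.castLE hnN)},
        B j = (a j).val + (p : ℤ) ^ (2 * σ - 1 + ν) * (τ j).val := by
  classical
  have : NeZero p := ⟨hp.ne_zero⟩
  have hσ := ha.2.one_le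
  obtain ⟨B, hBe, hBc, hB⟩ := IsMinorSolution.exists_lift hp (Fin.castLE_injective hnN) ha
    fun j => if h : j ∈ Set.range (Fin.castLE hnN) then 0 else ((τ ⟨j, h⟩).val : ℤ)
  refine ⟨B, hB.of_dvd_sub (by omega) fun j => ?_, ?_, fun j => by rw [hBc j j.2, dif_neg j.2]⟩
  · rw [ZMod.val_intCast, ← Nat.cast_pow]
    exact (Int.mod_modEq _ _).symm.dvd
  · have hval : a = fun j => (((a j).val : ℤ) : ZMod (p ^ (2 * σ - 1 + ν))) := by simp
    conv_rhs => rw [hval]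
    refine weightedClass_intCast_eq_iff.2 fun j => ?_
    split_ifs with hj
    · obtain ⟨k, rfl⟩ : j ∈ Set.range (Fin.castLE hnN) := by rwa [Fin.range_castLE]
      have hpow : (p : ℤ) ^ (2 * σ - 1 + ν) = p ^ (σ - 1) * p ^ (σ + ν) := by
        rw [← pow_add]
        congr 1
        omega
      rw [hpow]
      exact mul_dvd_mul_left _ (dvd_sub_comm.1 (hBe k))
    · have hj' : j ∉ Set.range (Fin.castLE hnN) := by rwa [Fin.range_castLE]
      rw [one_mul, hBc j hj', dif_neg hj', sub_add_cancel_left, dvd_neg]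
      exact dvd_mul_right _ _

theorem Nat.card_fun_compl_range_castLE (p : ℕ) (hnN : n ≤ N) :
    Nat.card ({j // j ∉ Set.range (Fin.castLE hnN)} → ZMod p) = p ^ (N - n) := by
  classical
  rw [Nat.card_fun, Nat.card_zmod, Nat.card_eq_fintype_card, Fintype.card_subtype_compl,
    Fintype.card_fin, Set.card_range_of_injective (Fin.castLE_injective hnN), Fintype.card_fin]

theorem pow_mul_Mcount_le_Mcount_succ (hp : p.Prime) (hnN : n ≤ N)
    (f : Fin n → MvPolynomial (Fin N) ℤ) (ν : ℕ) :
    p ^ (N - n) * Mcount p n N σ ν hnN f ≤ Mcount p n N σ (ν + 1) hnN f := by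
  classical
  have : NeZero p := ⟨hp.ne_zero⟩
  rw [Mcount_eq_card_image, Mcount_eq_card_image]
  set X := weightedClass p n σ (2 * σ - 1 + ν) '' minorSolutions p σ (2 * σ - 1 + ν) hnN f
  set T := {j // j ∉ Set.range (Fin.castLE hnN)} → ZMod p
  choose a ha hwa using fun s : X => s.2
  choose B hBmem hBw hBt using fun (s : X) (τ : T) => exists_lift_of_mem_minorSolutions hp (ha s) τ
  let Φ : X × T → weightedClass p n σ (2 * σ - 1 + (ν + 1)) ''
      minorSolutions p σ (2 * σ - 1 + (ν + 1)) hnN f :=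
    fun sτ => ⟨_, Set.mem_image_of_mem _ (hBmem sτ.1 sτ.2)⟩
  have hΦ : Injective Φ := by
    rintro ⟨s, τ⟩ ⟨s', τ'⟩ h
    have hdvd := weightedClass_intCast_eq_iff.1 (congrArg Subtype.val h)
    obtain rfl : s = s' := by
      refine Subtype.ext ?_
      rw [← hwa, ← hwa, ← hBw s τ, ← hBw s' τ']
      exact weightedClass_intCast_eq_iff.2 fun j => (pow_dvd_pow _ (by omega)).trans (hdvd j)
    refine Prod.ext rfl (funext fun j => ?_)
    have hj : ¬ (j.1 : ℕ) < n := by simpa [Fin.range_castLE] using j.2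
    have hτ := hdvd j
    rw [if_neg hj, one_mul, hBt, hBt, add_sub_add_left_eq_sub, ← mul_sub,
      show 2 * σ - 1 + (ν + 1) = 2 * σ - 1 + ν + 1 by ring, pow_succ,
      mul_dvd_mul_iff_left (pow_ne_zero _ (by exact_mod_cast hp.ne_zero))] at hτ
    simpa using (ZMod.intCast_eq_intCast_iff_dvd_sub _ _ p).2 hτ
  calc p ^ (N - n) * Nat.card X = Nat.card (X × T) := by
        rw [Nat.card_prod, Nat.card_fun_compl_range_castLE]
        ring
    _ ≤ _ := Nat.card_le_card_of_injective Φ hΦ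

end Counting

theorem stmt_6_general (p : ℕ) (hp : p.Prime) (σ n N : ℕ) (hnN : n ≤ N)
    (f : Fin n → MvPolynomial (Fin N) ℤ) :
    ∀ ν : ℕ, p ^ ((N - n) * ν) * Mcount p n N σ 0 hnN f ≤ Mcount p n N σ ν hnN f := by
  intro ν
  induction ν with
  | zero => simp
  | succ ν ih =>
    calc p ^ ((N - n) * (ν + 1)) * Mcount p n N σ 0 hnN f
        = p ^ (N - n) * (p ^ ((N - n) * ν) * Mcount p n N σ 0 hnN f) := by ring
      _ ≤ p ^ (N - n) * Mcount p n N σ ν hnN f := Nat.mul_le_mul_left _ ih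
      _ ≤ Mcount p n N σ (ν + 1) hnN f := pow_mul_Mcount_le_Mcount_succ hp hnN f ν

/-- Lemma 3.1: if `M(σ,0) > 0` and `N ≥ n`, then `M(σ,ν) ≥ p^((N-n)ν) · M(σ,0)`
for every `ν ≥ 0`. -/
theorem stmt_6 (p : ℕ) (hp : p.Prime) (σ n N : ℕ) (hσ : 1 ≤ σ) (hnN : n ≤ N)
    (f : Fin n → MvPolynomial (Fin N) ℤ)
    (h0 : 0 < Mcount p n N σ 0 hnN f) :
    ∀ ν : ℕ, p ^ ((N - n) * ν) * Mcount p n N σ 0 hnN f ≤ Mcount p n N σ ν hnN f :=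
  stmt_6_general p hp σ n N hnN f
end

section
/- If x̄ = (x_1, ..., x_m) is a point with x_1, ..., x_m linearly dependent over ℚ and lying on the variety Φ_j^{(ρ)}(x̄) = 0 for all j, ρ, then x̄ is a singular point, i.e. the Jacobian matrix L(x̄) of the system (Φ_j^{(ρ)}) with respect to the variables has rank at most Rr - 1. -/
/-!
A rational relation `∑ a, c a • x a = 0` yields a nonzero vector in the left kernel of `L(x̄)`:
give the row `(ρ, j)` the weight `∏ k, c (j k)`. By the symmetry of `Φ`, the weighted sum
`∑ⱼ A(j) ∏ₖ c (j k) ∂Φⱼ` over non-decreasing `j` is the same sum over all tuples, and by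
multilinearity this is the derivative of `Φ (y, …, y)` at `y = ∑ a, c a • x a = 0`. Since `d ≥ 2`,
every term of that derivative still has `y = 0` in some slot, so it vanishes.
-/

open Finset Function Matrix

theorem Matrix.rank_le_card_sub_one_of_vecMul_eq_zero {K m n : Type*} [Field K] [Fintype m]
    [Fintype n] {M : Matrix m n K} {v : m → K} (hv : v ≠ 0) (h : v ᵥ* M = 0) :
    M.rank ≤ Fintype.card m - 1 := by
  have hdep : ¬ LinearIndependent K M.row := fun hli => by
    obtain ⟨i, hi⟩ := Function.ne_iff.mp hv
    exact hi (Fintype.linearIndependent_iff.mp hli v (by rw [row, ← vecMul_eq_sum, h]) i)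
  have hne : M.rank ≠ Fintype.card m := fun heq =>
    hdep (linearIndependent_iff_card_eq_finrank_span.mpr (heq ▸ M.rank_eq_finrank_span_row))
  have hle : M.rank ≤ Fintype.card m := M.rank_eq_finrank_span_row ▸ finrank_range_le_card _
  omega

section TupleOrbit

variable {α : Type*} [LinearOrder α] [Fintype α] {d : ℕ}

/-- The rearrangements of `j`; for non-decreasing `j` its cardinality is the paper's `A(j)`. -/
def tupleOrbit (j : Fin d → α) : Finset (Fin d → α) :=
  univ.filter fun g => ∃ σ : Equiv.Perm (Fin d), g = j ∘ σ

theorem mem_tupleOrbit_iff_comp_sort_eq {j : Fin d → α} (hj : Monotone j) (g : Fin d → α) :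
    g ∈ tupleOrbit j ↔ g ∘ Tuple.sort g = j := by
  simp only [tupleOrbit, mem_filter, mem_univ, true_and]
  constructor
  · rintro ⟨σ, rfl⟩
    rw [Tuple.comp_perm_comp_sort_eq_comp_sort, Tuple.sort_eq_refl_iff_monotone.mpr hj]
    rfl
  · intro h
    refine ⟨(Tuple.sort g)⁻¹, ?_⟩
    rw [← h]
    ext
    simp

theorem sum_card_tupleOrbit_nsmul {M : Type*} [AddCommMonoid M] (F : (Fin d → α) → M)
    (hF : ∀ (g : Fin d → α) (σ : Equiv.Perm (Fin d)), F (g ∘ σ) = F g) :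
    ∑ j : {j : Fin d → α // ∀ a b : Fin d, a ≤ b → j a ≤ j b}, (tupleOrbit j.1).card • F j.1
      = ∑ g, F g := by
  let sortTuple (g : Fin d → α) : {j : Fin d → α // ∀ a b : Fin d, a ≤ b → j a ≤ j b} :=
    ⟨g ∘ Tuple.sort g, fun _ _ hab => Tuple.monotone_sort g hab⟩
  rw [← sum_fiberwise univ sortTuple F]
  refine sum_congr rfl fun j _ => ?_
  have hfiber : univ.filter (fun g => sortTuple g = j) = tupleOrbit j.1 := by
    ext g
    rw [mem_tupleOrbit_iff_comp_sort_eq (fun a b hab => j.2 a b hab), mem_filter, Subtype.ext_iff]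
    simp [sortTuple]
  rw [hfiber, ← sum_const]
  refine sum_congr rfl fun g hg => ?_
  obtain ⟨σ, rfl⟩ := (mem_filter.mp hg).2
  exact (hF j.1 σ).symm

end TupleOrbit

namespace MultilinearMap

variable {R M N ι α : Type*} [CommSemiring R] [AddCommMonoid M] [Module R M] [AddCommMonoid N]
  [Module R N] [Fintype ι] [DecidableEq ι] [DecidableEq α]
  (f : MultilinearMap R (fun _ : ι => M) N)

/-- The derivative of `x ↦ f (x ∘ g)` with respect to `x i`, in direction `e`. -/
def tupleDeriv (x : α → M) (g : ι → α) (i : α) (e : M) : N :=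
  ∑ k, if g k = i then f (update (fun l => x (g l)) k e) else 0

theorem tupleDeriv_comp_perm (hf : ∀ (σ : Equiv.Perm ι) (v : ι → M), f (v ∘ σ) = f v)
    (x : α → M) (g : ι → α) (σ : Equiv.Perm ι) (i : α) (e : M) :
    f.tupleDeriv x (g ∘ σ) i e = f.tupleDeriv x g i e := by
  rw [tupleDeriv, tupleDeriv, ← Equiv.sum_comp σ (fun k => if g k = i then _ else 0)]
  refine sum_congr rfl fun k _ => ?_
  have hupdate : update (fun l => x ((g ∘ σ) l)) k e = update (fun l => x (g l)) (σ k) e ∘ σ := by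
    rw [update_comp_equiv, Equiv.symm_apply_apply]
    rfl
  rw [hupdate, hf]
  rfl

theorem sum_prod_smul_tupleDeriv [Fintype α] (c : α → R) (x : α → M) (i : α) (e : M) :
    ∑ g : ι → α, (∏ l, c (g l)) • f.tupleDeriv x g i e
      = ∑ k, f (update (fun _ => ∑ a, c a • x a) k (c i • e)) := by
  simp only [tupleDeriv, smul_sum, smul_ite, smul_zero]
  rw [sum_comm]
  refine sum_congr rfl fun k _ => ?_
  let w (l : ι) (a : α) : M := if l = k then (if a = i then c a • e else 0) else c a • x a
  have hexpand : update (fun _ => ∑ a, c a • x a) k (c i • e) = fun l => ∑ a, w l a := by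
    ext1 l
    by_cases hl : l = k
    · subst hl; simp [w]
    · simp [w, hl]
  rw [hexpand, f.map_sum]
  refine sum_congr rfl fun g _ => ?_
  have hterm : (fun l => w l (g l))
      = fun l => c (g l) • update (fun l => x (g l)) k (if g k = i then e else 0) l := by
    ext1 l
    by_cases hl : l = k
    · subst hl; by_cases h : g l = i <;> simp [w, h]
    · simp [w, hl]
  rw [hterm, f.map_smul_univ]
  split_ifs <;> simp

end MultilinearMap

theorem stmt_10_general (s m d R : ℕ) (hd : 2 ≤ d)
    (Φ : Fin R → MultilinearMap ℚ (fun _ : Fin d => (Fin s → ℚ)) ℚ)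
    (hsym : ∀ ρ (σ : Equiv.Perm (Fin d)) (v : Fin d → Fin s → ℚ), Φ ρ (v ∘ σ) = Φ ρ v)
    (x : Fin m → Fin s → ℚ)
    (hdep : ¬ LinearIndependent ℚ x) :
    Matrix.rank (Matrix.of fun
        (ρj : Fin R × {j : Fin d → Fin m // ∀ a b : Fin d, a ≤ b → j a ≤ j b})
        (iN : Fin m × Fin s) =>
        (((Finset.univ.filter (fun g : Fin d → Fin m =>
            ∃ σ : Equiv.Perm (Fin d), g = ρj.2.1 ∘ σ)).card : ℚ)) *
          ∑ k : Fin d, if ρj.2.1 k = iN.1 then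
            Φ ρj.1 (Function.update (fun l => x (ρj.2.1 l)) k (Pi.single iN.2 1)) else 0)
      ≤ R * Fintype.card {j : Fin d → Fin m // ∀ a b : Fin d, a ≤ b → j a ≤ j b} - 1 := by
  obtain ⟨c, hc, i₀, hi₀⟩ := Fintype.not_linearIndependent_iff.mp hdep
  rcases isEmpty_or_nonempty (Fin R) with hR | ⟨⟨ρ₀⟩⟩
  · exact (rank_le_card_height _).trans (by simp)
  refine (rank_le_card_sub_one_of_vecMul_eq_zero (v := fun p => ∏ k, c (p.2.1 k)) ?_ ?_).trans
    (by rw [Fintype.card_prod, Fintype.card_fin])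
  · refine Function.ne_iff.mpr ⟨(ρ₀, ⟨fun _ => i₀, fun _ _ _ => le_rfl⟩), ?_⟩
    simpa using pow_ne_zero d hi₀
  ext ⟨i, N⟩
  have : Nontrivial (Fin d) := Fin.nontrivial_iff_two_le.mpr hd
  simp only [vecMul, dotProduct, Fintype.sum_prod_type, of_apply, Pi.zero_apply]
  refine sum_eq_zero fun ρ _ => ?_
  calc _ = ∑ j : {j : Fin d → Fin m // ∀ a b : Fin d, a ≤ b → j a ≤ j b}, (tupleOrbit j.1).card •
          (∏ k, c (j.1 k)) • (Φ ρ).tupleDeriv x j.1 i (Pi.single N 1) := by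
        refine sum_congr rfl fun j _ => ?_
        rw [nsmul_eq_mul, smul_eq_mul, MultilinearMap.tupleDeriv, tupleOrbit]
        ring
    _ = ∑ g, (∏ k, c (g k)) • (Φ ρ).tupleDeriv x g i (Pi.single N 1) :=
        sum_card_tupleOrbit_nsmul (fun g => (∏ k, c (g k)) • (Φ ρ).tupleDeriv x g i _)
          fun g σ => by
            rw [(Φ ρ).tupleDeriv_comp_perm (hsym ρ)]
            exact congrArg (· • _) (Equiv.prod_comp σ fun k => c (g k))
    _ = ∑ k, Φ ρ (update (fun _ => ∑ a, c a • x a) k (c i • Pi.single N 1)) :=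
        (Φ ρ).sum_prod_smul_tupleDeriv c x i _
    _ = 0 := by
        simp only [hc]
        refine sum_eq_zero fun k _ => ?_
        obtain ⟨l, hl⟩ := exists_ne k
        exact (Φ ρ).map_coord_zero l (by simp [hl])

/-- If `x̄ = (x₁,…,xₘ)` lies on the variety `Φⱼ^(ρ)(x̄) = 0` (for all
non-decreasing tuples `j` and all `ρ`) and `x₁,…,xₘ` are linearly dependent
over `ℚ`, then `x̄` is a singular point: the `Rr × ms` Jacobian matrix `L(x̄)`
of the system has rank at most `Rr - 1`. -/
theorem stmt_10 (s m d R : ℕ) (hd : 2 ≤ d)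
    (Φ : Fin R → MultilinearMap ℚ (fun _ : Fin d => (Fin s → ℚ)) ℚ)
    (hsym : ∀ ρ (σ : Equiv.Perm (Fin d)) (v : Fin d → Fin s → ℚ), Φ ρ (v ∘ σ) = Φ ρ v)
    (x : Fin m → Fin s → ℚ)
    (hdep : ¬ LinearIndependent ℚ x)
    (hzero : ∀ (ρ : Fin R) (j : {j : Fin d → Fin m // ∀ a b : Fin d, a ≤ b → j a ≤ j b}),
      Φ ρ (fun k => x (j.1 k)) = 0) :
    Matrix.rank (Matrix.of fun
        (ρj : Fin R × {j : Fin d → Fin m // ∀ a b : Fin d, a ≤ b → j a ≤ j b})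
        (iN : Fin m × Fin s) =>
        (((Finset.univ.filter (fun g : Fin d → Fin m =>
            ∃ σ : Equiv.Perm (Fin d), g = ρj.2.1 ∘ σ)).card : ℚ)) *
          ∑ k : Fin d, if ρj.2.1 k = iN.1 then
            Φ ρj.1 (Function.update (fun l => x (ρj.2.1 l)) k (Pi.single iN.2 1)) else 0)
      ≤ R * Fintype.card {j : Fin d → Fin m // ∀ a b : Fin d, a ≤ b → j a ≤ j b} - 1 :=
  stmt_10_general s m d R hd Φ hsym x hdep
end

section
/- Let F be a homogeneous polynomial of degree d over ℤ_p in s variables, and suppose there exists a ∈ ℤ_p^s with F(a) = 0 and ∇F(a) ≠ 0. Then for σ = min over coordinates of the valuation structure (i.e., σ - 1 = v_p of some nonzero coordinate of ∇F(a)), the number Γ(p^ν) of solutions x mod p^ν to F(x) ≡ 0 (mod p^ν) satisfies Γ(p^ν) ≥ p^{(1-2σ)(s-1)} · p^{ν(s-1)} for all ν ≥ 2σ - 1. -/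
/-! Write `σ = k + 1` and let `n` be a coordinate with `v_p(∂ₙF(a)) = k`. For every choice of
residues `c_j mod p^(ν-2k-1)`, `j ≠ n`, the point `b = a + p^(2k+1) c` (with `bₙ = aₙ`) still has
`v_p(F(b)) ≥ 2k+1` and `v_p(∂ₙF(b)) = k`, so Hensel's lemma in the variable `xₙ` moves `b` to a
zero of `F` without changing its other coordinates. Distinct `c` give zeros that stay distinct
mod `p^ν`, so there are at least `p^((ν-2k-1)(s-1))` solutions mod `p^ν`. -/

open MvPolynomial

namespace MvPolynomial

variable {R ι : Type*} [CommRing R]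

theorem dvd_eval_sub_eval_s17 (F : MvPolynomial ι R) {c : R} {x y : ι → R}
    (h : ∀ i, c ∣ x i - y i) : c ∣ eval x F - eval y F := by
  simp only [← Ideal.mem_span_singleton, ← Ideal.Quotient.eq] at h ⊢
  rw [map_eval, map_eval]
  congr 2
  ext i
  exact h i

variable [DecidableEq ι]

theorem eval_aeval_update_C_X (F : MvPolynomial ι R) (x : ι → R) (i : ι) (t : R) :
    (aeval (Function.update (Polynomial.C ∘ x) i Polynomial.X) F).eval t =
      eval (Function.update x i t) F := by
  rw [← Polynomial.coe_aeval_eq_eval, ← AlgHom.comp_apply, comp_aeval]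
  simp only [Function.comp_def, Polynomial.coe_aeval_eq_eval]
  refine congrArg (eval · F) (_root_.funext fun j => ?_)
  rcases eq_or_ne j i with rfl | hj <;> simp [*]

theorem derivative_aeval_update_C_X (F : MvPolynomial ι R) (x : ι → R) (i : ι) :
    Polynomial.derivative (aeval (Function.update (Polynomial.C ∘ x) i Polynomial.X) F) =
      aeval (Function.update (Polynomial.C ∘ x) i Polynomial.X) (pderiv i F) := by
  induction F using MvPolynomial.induction_on with
  | C c => simp
  | add f g hf hg => simp [hf, hg]
  | mul_X f j hf =>
    rcases eq_or_ne j i with rfl | hj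
    · simp only [map_mul, aeval_X, Function.update_self, Polynomial.derivative_mul, hf,
        Polynomial.derivative_X, mul_one, Derivation.leibniz, pderiv_X, Pi.single_eq_same,
        smul_eq_mul, map_add]
      ring
    · simp only [map_mul, aeval_X, Function.update_of_ne hj, Function.comp_apply,
        Polynomial.derivative_mul, hf, Polynomial.derivative_C, mul_zero, add_zero,
        Derivation.leibniz, pderiv_X_of_ne hj, smul_eq_mul, zero_add]
      ring

end MvPolynomial

namespace PadicInt

variable {p : ℕ} [Fact p.Prime]

theorem norm_le_pow_iff_dvd (x : ℤ_[p]) (n : ℕ) :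
    ‖x‖ ≤ (p : ℝ) ^ (-n : ℤ) ↔ (p : ℤ_[p]) ^ n ∣ x := by
  rw [norm_le_pow_iff_mem_span_pow, Ideal.mem_span_singleton]

theorem norm_eq_pow_of_dvd_of_not_dvd {x : ℤ_[p]} {k : ℕ} (h : (p : ℤ_[p]) ^ k ∣ x)
    (h' : ¬(p : ℤ_[p]) ^ (k + 1) ∣ x) : ‖x‖ = (p : ℝ) ^ (-k : ℤ) := by
  refine le_antisymm ((norm_le_pow_iff_dvd x k).mpr h) (not_lt.mp fun hlt => h' ?_)
  rw [norm_lt_pow_iff_norm_le_pow_sub_one] at hlt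
  exact (norm_le_pow_iff_dvd x (k + 1)).mp (by rwa [Nat.cast_succ, neg_add'])

theorem toZModPow_add_pow_mul_val_injective (x : ℤ_[p]) (m μ : ℕ) :
    Function.Injective fun u : ZMod (p ^ μ) =>
      toZModPow (m + μ) (x + (p : ℤ_[p]) ^ m * (u.val : ℤ_[p])) := by
  intro u v huv
  dsimp only at huv
  rw [map_add, map_add, add_right_inj, ← sub_eq_zero, ← map_sub, ← mul_sub, ← RingHom.mem_ker,
    ker_toZModPow, Ideal.mem_span_singleton, pow_add,
    mul_dvd_mul_iff_left (pow_ne_zero _ (Nat.cast_ne_zero.mpr (Fact.out : p.Prime).ne_zero)),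
    ← Ideal.mem_span_singleton, ← ker_toZModPow, RingHom.mem_ker, map_sub, sub_eq_zero] at huv
  simpa using huv

end PadicInt

open PadicInt

section

variable {p : ℕ} [Fact p.Prime] {ι : Type*} [DecidableEq ι]

theorem MvPolynomial.exists_eval_update_eq_zero_of_norm_lt (F : MvPolynomial ι ℤ_[p])
    (x : ι → ℤ_[p]) (i : ι) (h : ‖eval x F‖ < ‖eval x (pderiv i F)‖ ^ 2) :
    ∃ z, eval (Function.update x i z) F = 0 := by
  set f := aeval (Function.update (Polynomial.C ∘ x) i Polynomial.X) F
  have hf (t : ℤ_[p]) : Polynomial.aeval t f = eval (Function.update x i t) F :=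
    eval_aeval_update_C_X F x i t
  have hf' (t : ℤ_[p]) :
      Polynomial.aeval t (Polynomial.derivative f) = eval (Function.update x i t) (pderiv i F) := by
    rw [derivative_aeval_update_C_X]
    exact eval_aeval_update_C_X _ x i t
  obtain ⟨z, hz, -⟩ := hensels_lemma (F := f) (a := x i) (by simpa [hf, hf'] using h)
  exact ⟨z, (hf z).symm.trans hz⟩

theorem MvPolynomial.exists_eval_update_eq_zero_of_dvd_sub {F : MvPolynomial ι ℤ_[p]}
    {a : ι → ℤ_[p]} (hFa : eval a F = 0) {i : ι} {k : ℕ}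
    (hk : (p : ℤ_[p]) ^ k ∣ eval a (pderiv i F))
    (hk' : ¬(p : ℤ_[p]) ^ (k + 1) ∣ eval a (pderiv i F))
    {b : ι → ℤ_[p]} (hb : ∀ j, (p : ℤ_[p]) ^ (2 * k + 1) ∣ b j - a j) :
    ∃ z, eval (Function.update b i z) F = 0 := by
  have hp : (1 : ℝ) < p := mod_cast (Fact.out : p.Prime).one_lt
  have hFb : (p : ℤ_[p]) ^ (2 * k + 1) ∣ eval b F := by
    simpa [hFa] using dvd_eval_sub_eval_s17 F hb
  have hsub : (p : ℤ_[p]) ^ (k + 1) ∣ eval b (pderiv i F) - eval a (pderiv i F) :=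
    (pow_dvd_pow _ (by omega)).trans (dvd_eval_sub_eval_s17 _ hb)
  have hderiv : ‖eval b (pderiv i F)‖ = (p : ℝ) ^ (-k : ℤ) :=
    norm_eq_pow_of_dvd_of_not_dvd
      ((dvd_iff_dvd_of_dvd_sub ((pow_dvd_pow _ k.le_succ).trans hsub)).mpr hk)
      (by rwa [dvd_iff_dvd_of_dvd_sub hsub])
  refine exists_eval_update_eq_zero_of_norm_lt F b i ?_
  calc ‖eval b F‖ ≤ (p : ℝ) ^ (-(2 * k + 1 : ℕ) : ℤ) := (norm_le_pow_iff_dvd _ _).mpr hFb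
    _ < (p : ℝ) ^ (-(2 * k : ℕ) : ℤ) := zpow_lt_zpow_right₀ hp (by omega)
    _ = ‖eval b (pderiv i F)‖ ^ 2 := by
      rw [hderiv, ← zpow_natCast, ← zpow_mul]
      push_cast
      ring_nf

theorem pow_le_card_zeros_toZModPow [Fintype ι] {F : MvPolynomial ι ℤ_[p]}
    {a : ι → ℤ_[p]} (hFa : eval a F = 0) {i : ι} {k : ℕ}
    (hk : (p : ℤ_[p]) ^ k ∣ eval a (pderiv i F))
    (hk' : ¬(p : ℤ_[p]) ^ (k + 1) ∣ eval a (pderiv i F))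
    {ν : ℕ} (hν : 2 * k + 1 ≤ ν) :
    p ^ ((ν - (2 * k + 1)) * (Fintype.card ι - 1)) ≤
      Nat.card {x : ι → ZMod (p ^ ν) // eval x (map (toZModPow ν) F) = 0} := by
  obtain ⟨μ, rfl⟩ := Nat.exists_eq_add_of_le hν
  set m := 2 * k + 1
  let shift (c : {j // j ≠ i} → ZMod (p ^ μ)) (j : ι) : ℤ_[p] :=
    if hj : j = i then a j else a j + (p : ℤ_[p]) ^ m * ((c ⟨j, hj⟩).val : ℤ_[p])
  have hshift c j : (p : ℤ_[p]) ^ m ∣ shift c j - a j := by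
    by_cases hj : j = i <;> simp [shift, hj]
  choose z hz using fun c => exists_eval_update_eq_zero_of_dvd_sub hFa hk hk' (hshift c)
  let root c := Function.update (shift c) i (z c)
  let Φ (c : {j // j ≠ i} → ZMod (p ^ μ)) :
      {x : ι → ZMod (p ^ (m + μ)) // eval x (map (toZModPow (m + μ)) F) = 0} :=
    ⟨toZModPow (m + μ) ∘ root c, by rw [← map_eval, hz, map_zero]⟩
  have hΦ : Function.Injective Φ := by
    intro c c' h
    ext j
    have := congrFun (congrArg Subtype.val h) j
    simp only [Φ, root, Function.comp_apply, Function.update_of_ne j.2, shift, dif_neg j.2] at this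
    exact toZModPow_add_pow_mul_val_injective _ _ _ this
  calc p ^ ((m + μ - m) * (Fintype.card ι - 1))
      = Nat.card ({j // j ≠ i} → ZMod (p ^ μ)) := by
        simp [pow_mul, Fintype.card_subtype_compl]
    _ ≤ _ := Nat.card_le_card_of_injective Φ hΦ

end

theorem stmt_17_general (p : ℕ) [Fact p.Prime] (s σ : ℕ)
    (F : MvPolynomial (Fin s) ℤ_[p])
    (a : Fin s → ℤ_[p]) (hFa : MvPolynomial.eval a F = 0)
    (hgrad : ∃ n : Fin s,
      ((p : ℤ_[p]) ^ (σ - 1) ∣ MvPolynomial.eval a (MvPolynomial.pderiv n F)) ∧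
      ¬ ((p : ℤ_[p]) ^ σ ∣ MvPolynomial.eval a (MvPolynomial.pderiv n F))) :
    ∀ ν : ℕ, 2 * σ - 1 ≤ ν →
      (p : ℝ) ^ (((1 : ℤ) - 2 * σ) * ((s : ℤ) - 1)) * (p : ℝ) ^ ((ν : ℤ) * ((s : ℤ) - 1)) ≤
        (Nat.card {x : Fin s → ZMod (p ^ ν) //
          MvPolynomial.eval x (MvPolynomial.map (PadicInt.toZModPow ν) F) = 0} : ℝ) := by
  intro ν hν
  obtain ⟨n, hdvd, hndvd⟩ := hgrad
  obtain ⟨k, rfl⟩ : ∃ k, σ = k + 1 :=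
    Nat.exists_eq_add_one.mpr (Nat.pos_of_ne_zero fun h => hndvd (by simp [h]))
  rw [Nat.add_sub_cancel] at hdvd
  have hcount := pow_le_card_zeros_toZModPow hFa hdvd hndvd (ν := ν) (by omega)
  rw [Fintype.card_fin] at hcount
  have hs : 1 ≤ s := n.pos
  calc (p : ℝ) ^ (((1 : ℤ) - 2 * (k + 1 : ℕ)) * ((s : ℤ) - 1)) * (p : ℝ) ^ ((ν : ℤ) * ((s : ℤ) - 1))
      = ((p ^ ((ν - (2 * k + 1)) * (s - 1)) : ℕ) : ℝ) := by
        rw [← zpow_add₀ (by exact_mod_cast (Fact.out : p.Prime).ne_zero), Nat.cast_pow,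
          ← zpow_natCast]
        push_cast [Nat.cast_sub hs, Nat.cast_sub (show 2 * k + 1 ≤ ν by omega)]
        ring_nf
    _ ≤ _ := by exact_mod_cast hcount

/-- The `m = 1, R = 1` case of Lemma 3.2: if `F ∈ ℤ_p[x₁,…,x_s]` is homogeneous of
degree `d` and there is `a ∈ ℤ_p^s` with `F(a) = 0` and some coordinate of
`∇F(a)` of `p`-adic valuation exactly `σ - 1`, then the number `Γ(p^ν)` of
solutions of `F(x) ≡ 0 (mod p^ν)` satisfies
`Γ(p^ν) ≥ p^((1-2σ)(s-1)) · p^(ν(s-1))` for all `ν ≥ 2σ - 1`. -/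
theorem stmt_17 (p : ℕ) [Fact p.Prime] (s d σ : ℕ) (hσ : 1 ≤ σ)
    (F : MvPolynomial (Fin s) ℤ_[p]) (hF : F.IsHomogeneous d)
    (a : Fin s → ℤ_[p]) (hFa : MvPolynomial.eval a F = 0)
    (hgrad : ∃ n : Fin s,
      ((p : ℤ_[p]) ^ (σ - 1) ∣ MvPolynomial.eval a (MvPolynomial.pderiv n F)) ∧
      ¬ ((p : ℤ_[p]) ^ σ ∣ MvPolynomial.eval a (MvPolynomial.pderiv n F))) :
    ∀ ν : ℕ, 2 * σ - 1 ≤ ν →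
      (p : ℝ) ^ (((1 : ℤ) - 2 * σ) * ((s : ℤ) - 1)) * (p : ℝ) ^ ((ν : ℤ) * ((s : ℤ) - 1)) ≤
        (Nat.card {x : Fin s → ZMod (p ^ ν) //
          MvPolynomial.eval x (MvPolynomial.map (PadicInt.toZModPow ν) F) = 0} : ℝ) :=
  stmt_17_general p s σ F a hFa hgrad
end
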